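/- arXiv:math-ph/0506053 — 5 statements merged into one kernel-verified Lean document; each statement's English description precedes it below -/
import Mathlib

section
/- Let μ be a positive Borel measure on [0,∞) and suppose there are constants t₀, δ, c_l, c_u ∈ (0,∞) such that the Laplace transform μ̃(t) = ∫ e^{-Et} dμ(E) exists and satisfies c_l t^{-δ} ≤ μ̃(t) ≤ c_u t^{-δ} for all t ≥ t₀. Then there exist constants C_l, C_u ∈ (0,∞) such that C_l E^δ ≤ μ([0,E]) ≤ C_u E^δ for all E ∈ (0, 1/t₀]. -/
open MeasureTheory

/-- Tauberian lemma: two-sided power bounds `c_l t^{-δ} ≤ μ̃(t) ≤ c_u t^{-δ}`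
on the Laplace transform of a Borel measure on `[0,∞)` imply two-sided power
bounds `C_l E^δ ≤ μ([0,E]) ≤ C_u E^δ` for `E ∈ (0, 1/t₀]`. -/
theorem tauberian_lemma (μ : Measure ℝ) (hsupp : μ (Set.Iio 0) = 0)
    (t₀ δ c_l c_u : ℝ) (ht₀ : 0 < t₀) (hδ : 0 < δ) (hcl : 0 < c_l) (hcu : 0 < c_u)
    (hint : ∀ t : ℝ, t₀ ≤ t → Integrable (fun E : ℝ => Real.exp (-E * t)) μ)
    (hlow : ∀ t : ℝ, t₀ ≤ t →
      c_l * t ^ (-δ) ≤ ∫ E, Real.exp (-E * t) ∂μ)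
    (hup : ∀ t : ℝ, t₀ ≤ t →
      (∫ E, Real.exp (-E * t) ∂μ) ≤ c_u * t ^ (-δ)) :
    ∃ C_l > (0:ℝ), ∃ C_u > (0:ℝ), ∀ E ∈ Set.Ioc (0:ℝ) (1 / t₀),
      C_l * E ^ δ ≤ (μ (Set.Icc 0 E)).toReal ∧
        (μ (Set.Icc 0 E)).toReal ≤ C_u * E ^ δ := by
  -- choose the scale `a`
  set a : ℝ := max 2 (2 * Real.log (2 * c_u * 2 ^ (δ:ℝ) / c_l)) with ha_def
  have ha2 : (2:ℝ) ≤ a := le_max_left _ _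
  have ha0 : (0:ℝ) < a := lt_of_lt_of_le two_pos ha2
  have h2δ : (0:ℝ) < (2:ℝ) ^ (δ:ℝ) := Real.rpow_pos_of_pos two_pos _
  have haδ : (0:ℝ) < a ^ (-δ) := Real.rpow_pos_of_pos ha0 _
  -- the key property of `a`
  have hchoice : Real.exp (-(a/2)) * (c_u * 2 ^ (δ:ℝ)) ≤ c_l / 2 := by
    have hXpos : (0:ℝ) < 2 * c_u * 2 ^ (δ:ℝ) / c_l := by positivity
    have h1 : 2 * Real.log (2 * c_u * 2 ^ (δ:ℝ) / c_l) ≤ a := le_max_right _ _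
    have h2 : -(a/2) ≤ -Real.log (2 * c_u * 2 ^ (δ:ℝ) / c_l) := by linarith
    have h3 : Real.exp (-(a/2)) ≤ (2 * c_u * 2 ^ (δ:ℝ) / c_l)⁻¹ := by
      calc Real.exp (-(a/2)) ≤ Real.exp (-Real.log (2 * c_u * 2 ^ (δ:ℝ) / c_l)) :=
            Real.exp_le_exp.2 h2
        _ = (2 * c_u * 2 ^ (δ:ℝ) / c_l)⁻¹ := by
            rw [Real.exp_neg, Real.exp_log hXpos]
    have h4 : Real.exp (-(a/2)) * (c_u * 2 ^ (δ:ℝ)) ≤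
        (2 * c_u * 2 ^ (δ:ℝ) / c_l)⁻¹ * (c_u * 2 ^ (δ:ℝ)) := by
      apply mul_le_mul_of_nonneg_right h3 (by positivity)
    calc Real.exp (-(a/2)) * (c_u * 2 ^ (δ:ℝ)) ≤
        (2 * c_u * 2 ^ (δ:ℝ) / c_l)⁻¹ * (c_u * 2 ^ (δ:ℝ)) := h4
      _ = c_l / 2 := by field_simp
  refine ⟨c_l / 2 * a ^ (-δ), by positivity, Real.exp 1 * c_u, by positivity, ?_⟩
  rintro E ⟨hE0, hE1⟩
  have hEinv : t₀ ≤ 1 / E := by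
    rw [le_div_iff₀ hE0]
    calc t₀ * E ≤ t₀ * (1 / t₀) := mul_le_mul_of_nonneg_left hE1 ht₀.le
      _ = 1 := by field_simp
  -- finiteness of `μ (Icc 0 E)`
  have hfin : μ (Set.Icc 0 E) < ⊤ := by
    refine lt_of_le_of_lt (measure_mono ?_)
      ((hint (1/E) hEinv).measure_ge_lt_top (ε := Real.exp (-E * (1/E)))
        (Real.exp_pos _))
    intro x hx
    exact Real.exp_le_exp.2 (by
      have := hx.2
      have h1E : 0 < 1/E := by positivity
      nlinarith)
  have hfinR : (0:ℝ) ≤ (μ (Set.Icc 0 E)).toReal := ENNReal.toReal_nonneg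
  -- rpow computations
  have hEδ : (0:ℝ) < E ^ (δ:ℝ) := Real.rpow_pos_of_pos hE0 _
  have hinvE : ((1:ℝ)/E) ^ (-δ) = E ^ (δ:ℝ) := by
    rw [one_div, Real.inv_rpow hE0.le, Real.rpow_neg hE0.le, inv_inv]
  constructor
  · -- LOWER BOUND
    set t : ℝ := a / E with ht_def
    have ht : t₀ ≤ t := by
      calc t₀ ≤ 1 / E := hEinv
        _ ≤ a / E := by gcongr; linarith
    have ht2 : t₀ ≤ t / 2 := by
      have : t / 2 = (a/2) / E := by ring
      rw [this]
      calc t₀ ≤ 1 / E := hEinv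
        _ ≤ (a/2) / E := by gcongr; linarith
    -- split the integral
    have hI := hint t ht
    have hsplit : ∫ x, Real.exp (-x * t) ∂μ =
        (∫ x in Set.Icc 0 E, Real.exp (-x * t) ∂μ) +
        ∫ x in Set.Ioi E, Real.exp (-x * t) ∂μ := by
      have hcompl : (∫ x in (Set.Ici (0:ℝ))ᶜ, Real.exp (-x * t) ∂μ) = 0 := by
        rw [Set.compl_Ici]
        rw [Measure.restrict_eq_zero.2 hsupp]
        simp
      have h := integral_add_compl (measurableSet_Ici (a := (0:ℝ))) hI
      rw [hcompl, add_zero] at h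
      rw [← h, ← Set.Icc_union_Ioi_eq_Ici hE0.le,
        setIntegral_union (((Set.Iic_disjoint_Ioi le_rfl).mono_left Set.Icc_subset_Iic_self)) measurableSet_Ioi
          hI.integrableOn hI.integrableOn]
    -- bound the head
    have hhead : (∫ x in Set.Icc 0 E, Real.exp (-x * t) ∂μ) ≤
        (μ (Set.Icc 0 E)).toReal := by
      have : (∫ x in Set.Icc 0 E, Real.exp (-x * t) ∂μ) ≤
          ∫ _x in Set.Icc 0 E, (1:ℝ) ∂μ := by
        apply setIntegral_mono_on hI.integrableOn
          (integrableOn_const hfin.ne) measurableSet_Icc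
        intro x hx
        rw [Real.exp_le_one_iff]
        have ht0' : 0 < t := lt_of_lt_of_le ht₀ ht
        nlinarith [hx.1]
      simpa [Measure.real] using this
    -- bound the tail
    have htail : (∫ x in Set.Ioi E, Real.exp (-x * t) ∂μ) ≤
        Real.exp (-(a/2)) * (c_u * (t/2) ^ (-δ)) := by
      have hI2 := hint (t/2) ht2
      have step1 : (∫ x in Set.Ioi E, Real.exp (-x * t) ∂μ) ≤
          ∫ x in Set.Ioi E, Real.exp (-(a/2)) * Real.exp (-x * (t/2)) ∂μ := by
        apply setIntegral_mono_on hI.integrableOn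
          (hI2.const_mul _).integrableOn measurableSet_Ioi
        intro x hx
        rw [← Real.exp_add, Real.exp_le_exp]
        have hxE : E ≤ x := le_of_lt hx
        have ht0' : 0 < t := lt_of_lt_of_le ht₀ ht
        have hEt : E * t = a := by
          rw [ht_def]; field_simp
        nlinarith
      have step2 : (∫ x in Set.Ioi E, Real.exp (-(a/2)) * Real.exp (-x * (t/2)) ∂μ)
          = Real.exp (-(a/2)) * ∫ x in Set.Ioi E, Real.exp (-x * (t/2)) ∂μ := by
        rw [integral_const_mul]
      have step3 : (∫ x in Set.Ioi E, Real.exp (-x * (t/2)) ∂μ) ≤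
          ∫ x, Real.exp (-x * (t/2)) ∂μ := by
        apply setIntegral_le_integral hI2
        filter_upwards with x using (Real.exp_pos _).le
      have step4 := hup (t/2) ht2
      calc (∫ x in Set.Ioi E, Real.exp (-x * t) ∂μ) ≤
          Real.exp (-(a/2)) * ∫ x in Set.Ioi E, Real.exp (-x * (t/2)) ∂μ := by
            rw [← step2]; exact step1
        _ ≤ Real.exp (-(a/2)) * (c_u * (t/2) ^ (-δ)) := by
            apply mul_le_mul_of_nonneg_left _ (Real.exp_pos _).le
            exact le_trans step3 step4
    -- combine
    have hlow' := hlow t ht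
    rw [hsplit] at hlow'
    -- rpow computations
    have htδ : t ^ (-δ) = a ^ (-δ) * E ^ (δ:ℝ) := by
      rw [ht_def, div_eq_mul_inv, Real.mul_rpow ha0.le (by positivity),
        ← one_div, hinvE]
    have ht2δ : (t/2) ^ (-δ) = a ^ (-δ) * 2 ^ (δ:ℝ) * E ^ (δ:ℝ) := by
      have : t / 2 = a * 2⁻¹ * E⁻¹ := by rw [ht_def]; ring
      rw [this, Real.mul_rpow (by positivity) (by positivity),
        Real.mul_rpow ha0.le (by positivity)]
      rw [Real.inv_rpow two_pos.le, Real.inv_rpow hE0.le,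
        Real.rpow_neg two_pos.le, Real.rpow_neg hE0.le, inv_inv, inv_inv]
    rw [htδ] at hlow'
    rw [ht2δ] at htail
    have key : Real.exp (-(a/2)) * (c_u * 2 ^ (δ:ℝ)) * (a ^ (-δ) * E ^ (δ:ℝ)) ≤
        c_l / 2 * (a ^ (-δ) * E ^ (δ:ℝ)) :=
      mul_le_mul_of_nonneg_right hchoice (by positivity)
    nlinarith [hhead, htail, hlow']
  · -- UPPER BOUND
    set t : ℝ := 1 / E with ht_def
    have hI := hint t hEinv
    have h1 : Real.exp (-E * t) * (μ (Set.Icc 0 E)).toReal ≤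
        ∫ x in Set.Icc 0 E, Real.exp (-x * t) ∂μ := by
      have : (∫ _x in Set.Icc 0 E, Real.exp (-E * t) ∂μ) ≤
          ∫ x in Set.Icc 0 E, Real.exp (-x * t) ∂μ := by
        apply setIntegral_mono_on (integrableOn_const hfin.ne)
          hI.integrableOn measurableSet_Icc
        intro x hx
        apply Real.exp_le_exp.2
        have ht0' : 0 < t := by rw [ht_def]; positivity
        nlinarith [hx.2]
      rw [setIntegral_const, smul_eq_mul, mul_comm] at this
      exact this
    have h2 : (∫ x in Set.Icc 0 E, Real.exp (-x * t) ∂μ) ≤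
        ∫ x, Real.exp (-x * t) ∂μ := by
      apply setIntegral_le_integral hI
      filter_upwards with x using (Real.exp_pos _).le
    have h3 := hup t hEinv
    have hEt : -E * t = -1 := by rw [ht_def]; field_simp
    rw [hEt] at h1
    rw [ht_def, hinvE] at h3
    have h4 : Real.exp (-1) * (μ (Set.Icc 0 E)).toReal ≤ c_u * E ^ (δ:ℝ) :=
      le_trans h1 (le_trans h2 h3)
    have h5 : Real.exp (-1) = (Real.exp 1)⁻¹ := Real.exp_neg 1
    rw [h5] at h4
    have hexp : (0:ℝ) < Real.exp 1 := Real.exp_pos 1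
    calc (μ (Set.Icc 0 E)).toReal
        = Real.exp 1 * ((Real.exp 1)⁻¹ * (μ (Set.Icc 0 E)).toReal) := by
          field_simp
      _ ≤ Real.exp 1 * (c_u * E ^ (δ:ℝ)) :=
          mul_le_mul_of_nonneg_left h4 hexp.le
      _ = Real.exp 1 * c_u * E ^ (δ:ℝ) := by ring
end

section
/- Let H₀ and W be Hermitian matrices on a finite-dimensional Hilbert space ℓ²(Λ) such that 2d·I - H₀ - (1-t)W has only nonnegative matrix entries in the standard basis for every t ∈ [0,1], and such that W has only nonnegative matrix entries. Then the function t ↦ e(t), where e(t) is the smallest eigenvalue of H₀ + tW, is non-decreasing on [0,1]. -/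
set_option linter.unusedSectionVars false

open Matrix Finset
open scoped ComplexOrder

section Aux

variable {Λ : Type*} [Fintype Λ] [DecidableEq Λ]

lemma aux_sub_smul_one_posSemidef {A : Matrix Λ Λ ℂ} (hA : A.IsHermitian) (c : ℝ)
    (h : ∀ i, c ≤ hA.eigenvalues i) :
    (A - (c:ℂ) • (1 : Matrix Λ Λ ℂ)).PosSemidef := by
  have hsub : A - (c:ℂ) • (1 : Matrix Λ Λ ℂ) =
      (hA.eigenvectorUnitary : Matrix Λ Λ ℂ) *
        Matrix.diagonal (fun i => ((hA.eigenvalues i - c : ℝ) : ℂ)) *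
        (star (hA.eigenvectorUnitary : Matrix Λ Λ ℂ)) := by
    have h1 : (c:ℂ) • (1 : Matrix Λ Λ ℂ) =
        (hA.eigenvectorUnitary : Matrix Λ Λ ℂ) * ((c:ℂ) • 1) *
          (star (hA.eigenvectorUnitary : Matrix Λ Λ ℂ)) := by
      rw [Matrix.mul_smul, mul_one, Matrix.smul_mul,
        (Matrix.mem_unitaryGroup_iff).mp hA.eigenvectorUnitary.2]
    have h2 : (c:ℂ) • (1 : Matrix Λ Λ ℂ) = Matrix.diagonal (fun _ => (c:ℂ)) := by
      ext i j
      by_cases hij : i = j <;> simp [Matrix.one_apply, hij]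
    conv_lhs => rw [hA.spectral_theorem, Unitary.conjStarAlgAut_apply, h1]
    rw [← Matrix.sub_mul, ← Matrix.mul_sub, h2, Matrix.diagonal_sub]
    congr 2
    ext i
    push_cast
    simp [Function.comp]
  rw [hsub]
  have hd : (Matrix.diagonal (fun i => ((hA.eigenvalues i - c : ℝ) : ℂ))).PosSemidef :=
    Matrix.posSemidef_diagonal_iff.mpr fun i =>
      Complex.zero_le_real.mpr (by linarith [h i])
  simpa [Matrix.star_eq_conjTranspose] using
    hd.mul_mul_conjTranspose_same (hA.eigenvectorUnitary : Matrix Λ Λ ℂ)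

omit [DecidableEq Λ] in
lemma aux_dot_self (v : Λ → ℂ) :
    star v ⬝ᵥ v = ((∑ x, Complex.normSq (v x) : ℝ) : ℂ) := by
  simp only [dotProduct, Pi.star_apply, Complex.ofReal_sum]
  refine Finset.sum_congr rfl fun x _ => ?_
  rw [Complex.normSq_eq_conj_mul_self]
  rfl

lemma aux_rayleigh {A : Matrix Λ Λ ℂ} (hA : A.IsHermitian) (c : ℝ)
    (h : ∀ i, c ≤ hA.eigenvalues i) (v : Λ → ℂ) :
    c * (∑ x, Complex.normSq (v x)) ≤ (star v ⬝ᵥ (A *ᵥ v)).re := by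
  have hp := (aux_sub_smul_one_posSemidef hA c h).dotProduct_mulVec_nonneg v
  rw [Matrix.sub_mulVec, dotProduct_sub, Matrix.smul_mulVec, Matrix.one_mulVec,
    dotProduct_smul, aux_dot_self] at hp
  have h2 := (Complex.le_def.mp hp).1
  simp only [Complex.zero_re, Complex.sub_re, smul_eq_mul, ← Complex.ofReal_mul,
    Complex.ofReal_re] at h2
  linarith

omit [DecidableEq Λ] in
lemma aux_eigen_dot {A : Matrix Λ Λ ℂ} {E : ℝ} {v : Λ → ℂ}
    (hv : A *ᵥ v = (E : ℂ) • v) :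
    (star v ⬝ᵥ (A *ᵥ v)).re = E * ∑ x, Complex.normSq (v x) := by
  rw [hv, dotProduct_smul, aux_dot_self, smul_eq_mul, ← Complex.ofReal_mul, Complex.ofReal_re]

omit [DecidableEq Λ] in
lemma aux_normSq_sum_pos {v : Λ → ℂ} (hv : v ≠ 0) :
    0 < ∑ x, Complex.normSq (v x) := by
  obtain ⟨x, hx⟩ := Function.ne_iff.mp hv
  exact Finset.sum_pos' (fun y _ => Complex.normSq_nonneg _)
    ⟨x, Finset.mem_univ x, Complex.normSq_pos.mpr hx⟩

lemma aux_sInf_eq [Nonempty Λ] {A : Matrix Λ Λ ℂ} (hA : A.IsHermitian) :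
    sInf {E : ℝ | ∃ v : Λ → ℂ, v ≠ 0 ∧ A.mulVec v = (E : ℂ) • v} =
      Finset.univ.inf' Finset.univ_nonempty hA.eigenvalues := by
  set c := Finset.univ.inf' Finset.univ_nonempty hA.eigenvalues with hc
  have hlow : ∀ E ∈ {E : ℝ | ∃ v : Λ → ℂ, v ≠ 0 ∧ A.mulVec v = (E : ℂ) • v}, c ≤ E := by
    rintro E ⟨v, hv0, hv⟩
    have h1 := aux_rayleigh hA c (fun i => Finset.inf'_le _ (Finset.mem_univ i)) v
    rw [aux_eigen_dot hv] at h1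
    exact le_of_mul_le_mul_right h1 (aux_normSq_sum_pos hv0)
  have hmem : c ∈ {E : ℝ | ∃ v : Λ → ℂ, v ≠ 0 ∧ A.mulVec v = (E : ℂ) • v} := by
    obtain ⟨i, -, hi⟩ := Finset.exists_mem_eq_inf' Finset.univ_nonempty hA.eigenvalues
    refine ⟨⇑(hA.eigenvectorBasis i), ?_, ?_⟩
    · exact (WithLp.ofLp_eq_zero 2).ne.2 <| hA.eigenvectorBasis.orthonormal.ne_zero i
    · rw [hA.mulVec_eigenvectorBasis i, ← hi]
      funext x
      simp [Complex.real_smul, hc]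
  exact le_antisymm (csInf_le ⟨c, hlow⟩ hmem) (le_csInf ⟨c, hmem⟩ hlow)

lemma aux_dot_expand (M : Matrix Λ Λ ℂ) (w : Λ → ℂ) :
    star w ⬝ᵥ (M *ᵥ w) = ∑ x, ∑ y, (starRingEnd ℂ) (w x) * (M x y * w y) := by
  simp [dotProduct, mulVec, Finset.mul_sum, Complex.star_def]

lemma aux_Q_split (d : ℕ) (A : Matrix Λ Λ ℂ) (w : Λ → ℂ) :
    (star w ⬝ᵥ (((2 * (d:ℂ)) • (1 : Matrix Λ Λ ℂ) - A) *ᵥ w)).re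
      = 2 * d * (∑ x, Complex.normSq (w x)) - (star w ⬝ᵥ (A *ᵥ w)).re := by
  rw [Matrix.sub_mulVec, dotProduct_sub, Matrix.smul_mulVec, Matrix.one_mulVec,
    dotProduct_smul, aux_dot_self, smul_eq_mul]
  have h : (2 * (d:ℂ)) * ((∑ x, Complex.normSq (w x) : ℝ) : ℂ)
      = ((2 * d * ∑ x, Complex.normSq (w x) : ℝ) : ℂ) := by push_cast; ring
  rw [h, Complex.sub_re, Complex.ofReal_re]

end Aux

/-- If `2d·I - H₀ - (1-t)W` has nonnegative entries for every `t ∈ [0,1]` and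
`W` has nonnegative entries, then the smallest eigenvalue of `H₀ + tW` is a
non-decreasing function of `t` on `[0,1]`. -/
theorem smallest_eigenvalue_monotone
    {Λ : Type*} [Fintype Λ] [DecidableEq Λ] [Nonempty Λ] (d : ℕ)
    (H₀ W : Matrix Λ Λ ℂ) (hH₀ : H₀.IsHermitian) (hW : W.IsHermitian)
    (hentries : ∀ t ∈ Set.Icc (0:ℝ) 1, ∀ x y : Λ,
      ∃ r : ℝ, 0 ≤ r ∧
        ((2 * (d:ℂ)) • (1 : Matrix Λ Λ ℂ) - H₀ - ((1 - t : ℝ) : ℂ) • W) x y = (r : ℂ))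
    (hWpos : ∀ x y : Λ, ∃ r : ℝ, 0 ≤ r ∧ W x y = (r : ℂ)) :
    MonotoneOn
      (fun t : ℝ => sInf {E : ℝ | ∃ v : Λ → ℂ, v ≠ 0 ∧
        (H₀ + (t : ℂ) • W).mulVec v = (E : ℂ) • v})
      (Set.Icc 0 1) := by
  -- Hermitian for each parameter value
  have hherm : ∀ u : ℝ, (H₀ + (u:ℂ) • W).IsHermitian := by
    intro u
    refine hH₀.add ?_
    show ((u:ℂ) • W)ᴴ = (u:ℂ) • W
    rw [Matrix.conjTranspose_smul, hW.eq, Complex.star_def, Complex.conj_ofReal]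
  -- nonnegative entries of `M u := 2d•1 - H₀ - u•W` for `u ∈ [0,1]`
  have hM : ∀ u ∈ Set.Icc (0:ℝ) 1, ∀ x y : Λ, ∃ r : ℝ, 0 ≤ r ∧
      ((2 * (d:ℂ)) • (1 : Matrix Λ Λ ℂ) - H₀ - (u : ℂ) • W) x y = (r : ℂ) := by
    intro u hu x y
    obtain ⟨r, hr, he⟩ := hentries (1 - u) ⟨by linarith [hu.2], by linarith [hu.1]⟩ x y
    refine ⟨r, hr, ?_⟩
    rw [← he]
    norm_num
  intro s hs t ht hst
  simp only
  rw [aux_sInf_eq (hherm s), aux_sInf_eq (hherm t)]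
  refine Finset.le_inf' _ _ fun i _ => ?_
  -- the eigenvector for eigenvalue `E := eigenvalues i` of `H₀ + t•W`
  set E : ℝ := (hherm t).eigenvalues i with hE
  set v : Λ → ℂ := ⇑((hherm t).eigenvectorBasis i) with hv
  have hv0 : v ≠ 0 := (WithLp.ofLp_eq_zero 2).ne.2 <| (hherm t).eigenvectorBasis.orthonormal.ne_zero i
  have hveq : (H₀ + (t:ℂ) • W) *ᵥ v = (E : ℂ) • v := by
    rw [hv, (hherm t).mulVec_eigenvectorBasis i]
    funext x
    simp [Complex.real_smul, hE]
  set n : ℝ := ∑ x, Complex.normSq (v x) with hn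
  have hnpos : 0 < n := aux_normSq_sum_pos hv0
  -- entries
  choose Rt hRt0 hRt using hM t ht
  choose Rs hRs0 hRs using hM s hs
  choose ρ hρ0 hρ using hWpos
  -- Rt ≤ Rs entrywise
  have hRle : ∀ x y, Rt x y ≤ Rs x y := by
    intro x y
    have hdiff : ((Rs x y : ℝ) : ℂ) = ((Rt x y + (t - s) * ρ x y : ℝ) : ℂ) := by
      rw [← hRs x y]
      have h1 : ((2 * (d:ℂ)) • (1 : Matrix Λ Λ ℂ) - H₀ - (s : ℂ) • W) x y
          = ((2 * (d:ℂ)) • (1 : Matrix Λ Λ ℂ) - H₀ - (t : ℂ) • W) x y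
            + (((t - s : ℝ)) : ℂ) * W x y := by
        simp only [Matrix.sub_apply, Matrix.smul_apply, smul_eq_mul]
        push_cast
        ring
      rw [h1, hRt x y, hρ x y]
      push_cast
      ring
    have h2 := Complex.ofReal_injective hdiff
    nlinarith [mul_nonneg (sub_nonneg.mpr hst) (hρ0 x y)]
  -- quantities
  set Mt : Matrix Λ Λ ℂ := (2 * (d:ℂ)) • (1 : Matrix Λ Λ ℂ) - H₀ - (t : ℂ) • W with hMt
  set Ms : Matrix Λ Λ ℂ := (2 * (d:ℂ)) • (1 : Matrix Λ Λ ℂ) - H₀ - (s : ℂ) • W with hMs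
  have hMt' : Mt = (2 * (d:ℂ)) • (1 : Matrix Λ Λ ℂ) - (H₀ + (t:ℂ) • W) := by
    rw [hMt, sub_sub]
  have hMs' : Ms = (2 * (d:ℂ)) • (1 : Matrix Λ Λ ℂ) - (H₀ + (s:ℂ) • W) := by
    rw [hMs, sub_sub]
  -- step a : Q(Mt) v ≤ ∑∑ Rt |v x| |v y|
  have ha : (star v ⬝ᵥ (Mt *ᵥ v)).re
      ≤ ∑ x, ∑ y, Rt x y * ‖v x‖ * ‖v y‖ := by
    calc (star v ⬝ᵥ (Mt *ᵥ v)).re ≤ ‖star v ⬝ᵥ (Mt *ᵥ v)‖ :=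
          Complex.re_le_norm _
      _ = ‖∑ x, ∑ y, (starRingEnd ℂ) (v x) * (Mt x y * v y)‖ := by
          rw [aux_dot_expand]
      _ ≤ ∑ x, ‖∑ y, (starRingEnd ℂ) (v x) * (Mt x y * v y)‖ :=
          norm_sum_le _ _
      _ ≤ ∑ x, ∑ y, ‖(starRingEnd ℂ) (v x) * (Mt x y * v y)‖ :=
          Finset.sum_le_sum fun x _ => norm_sum_le _ _
      _ = ∑ x, ∑ y, Rt x y * ‖v x‖ * ‖v y‖ := by
          refine Finset.sum_congr rfl fun x _ => Finset.sum_congr rfl fun y _ => ?_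
          rw [norm_mul, norm_mul, Complex.norm_conj, hRt x y,
            Complex.norm_of_nonneg (hRt0 x y)]
          ring
  -- step b
  have hb : ∑ x, ∑ y, Rt x y * ‖v x‖ * ‖v y‖
      ≤ ∑ x, ∑ y, Rs x y * ‖v x‖ * ‖v y‖ := by
    refine Finset.sum_le_sum fun x _ => Finset.sum_le_sum fun y _ => ?_
    exact mul_le_mul_of_nonneg_right
      (mul_le_mul_of_nonneg_right (hRle x y) (norm_nonneg (v x)))
      (norm_nonneg (v y))
  -- the absolute-value vector
  set u : Λ → ℂ := fun x => ((‖v x‖ : ℝ) : ℂ) with hu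
  have hnu : ∑ x, Complex.normSq (u x) = n := by
    rw [hn]
    refine Finset.sum_congr rfl fun x _ => ?_
    rw [hu]
    simp [Complex.normSq_ofReal, Complex.sq_norm, ← Complex.normSq_eq_norm_sq]
    rw [← Complex.sq_norm]
    ring
  -- step c
  have hc : ∑ x, ∑ y, Rs x y * ‖v x‖ * ‖v y‖
      = (star u ⬝ᵥ (Ms *ᵥ u)).re := by
    rw [aux_dot_expand, Complex.re_sum]
    refine Finset.sum_congr rfl fun x _ => ?_
    rw [Complex.re_sum]
    refine Finset.sum_congr rfl fun y _ => ?_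
    rw [hu]
    simp only [Complex.conj_ofReal, hRs x y]
    rw [← Complex.ofReal_mul, ← Complex.ofReal_mul, Complex.ofReal_re]
    ring
  -- step d/e : Rayleigh lower bound for `H₀ + s•W` at `u`
  have he : Finset.univ.inf' Finset.univ_nonempty (hherm s).eigenvalues * n
      ≤ (star u ⬝ᵥ ((H₀ + (s:ℂ) • W) *ᵥ u)).re := by
    have := aux_rayleigh (hherm s)
      (Finset.univ.inf' Finset.univ_nonempty (hherm s).eigenvalues)
      (fun j => Finset.inf'_le _ (Finset.mem_univ j)) u
    rwa [hnu] at this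
  -- combine everything
  have hQt : (star v ⬝ᵥ (Mt *ᵥ v)).re = 2 * d * n - E * n := by
    rw [hMt', aux_Q_split, aux_eigen_dot hveq, hn]
  have hQs : (star u ⬝ᵥ (Ms *ᵥ u)).re
      = 2 * d * n - (star u ⬝ᵥ ((H₀ + (s:ℂ) • W) *ᵥ u)).re := by
    rw [hMs', aux_Q_split, hnu]
  have hfinal : Finset.univ.inf' Finset.univ_nonempty (hherm s).eigenvalues * n ≤ E * n := by
    have h1 : 2 * d * n - E * n
        ≤ 2 * d * n - (Finset.univ.inf' Finset.univ_nonempty (hherm s).eigenvalues * n) := by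
      rw [← hQt]
      calc (star v ⬝ᵥ (Mt *ᵥ v)).re
          ≤ ∑ x, ∑ y, Rs x y * ‖v x‖ * ‖v y‖ := le_trans ha hb
        _ = (star u ⬝ᵥ (Ms *ᵥ u)).re := hc
        _ = 2 * d * n - (star u ⬝ᵥ ((H₀ + (s:ℂ) • W) *ᵥ u)).re := hQs
        _ ≤ 2 * d * n - Finset.univ.inf' Finset.univ_nonempty (hherm s).eigenvalues * n := by
            linarith
    linarith
  exact le_of_mul_le_mul_right hfinal hnpos
end

section
/- Let Λ ⊂ ℤ^d be a finite cube, let 𝔊 = (Λ, 𝔈) be a subgraph of the fully connected cube 𝕃_Λ^d (the restriction of the nearest-neighbour lattice graph to Λ), and define the operator 𝔥(t) = 𝔥_𝕃 + t(𝔥_𝔊 - 𝔥_𝕃) on ℓ²(Λ), where for a subgraph G with edge set E(G), (𝔥_G φ)(x) = -Σ_{y: {x,y}∈E(G)} φ(y) + (2d - b_{∂Λ}(x)) φ(x) and b_{∂Λ}(x) is the number of lattice edges joining x to ℤ^d \ Λ. Then the smallest eigenvalue 𝔢(t) of 𝔥(t) is a non-decreasing function of t on [0,1]. -/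
open scoped Classical

/-- Nearest-neighbour relation in `ℤ^d`. -/
def LatAdj (d : ℕ) (x y : Fin d → ℤ) : Prop := ∑ ν, (x ν - y ν) ^ 2 = 1

/-- Number of lattice edges joining `x ∈ ℤ^d` to the complement of `Λ`. -/
noncomputable def boundaryDeg (d : ℕ) (Λ : Finset (Fin d → ℤ)) (x : Fin d → ℤ) : ℕ :=
  ((Finset.univ : Finset (Fin d × Bool)).filter
    (fun p => (fun ν => x ν + (if p.2 then 1 else -1) * (if ν = p.1 then 1 else 0)) ∉ Λ)).card

/-- The finite-volume Laplacian `𝔥_𝔊` on `ℓ²(Λ)` of a subgraph of `𝕃_Λ^d`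
given by the symmetric edge relation `𝔈`:
`(𝔥_𝔊 φ)(x) = -∑_{y : {x,y} ∈ 𝔈} φ(y) + (2d - b_{∂Λ}(x)) φ(x)`. -/
noncomputable def hOp (d : ℕ) (Λ : Finset (Fin d → ℤ))
    (𝔈 : (Fin d → ℤ) → (Fin d → ℤ) → Prop)
    (φ : {x // x ∈ Λ} → ℝ) (x : {x // x ∈ Λ}) : ℝ :=
  -(∑ y : {x // x ∈ Λ}, if 𝔈 x.1 y.1 then φ y else 0) +
    ((2 * d : ℝ) - (boundaryDeg d Λ x.1 : ℝ)) * φ x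

noncomputable section AuxEV

variable (d : ℕ) (Λ : Finset (Fin d → ℤ)) (𝔈 : (Fin d → ℤ) → (Fin d → ℤ) → Prop)

def coefA (t : ℝ) (x y : {x // x ∈ Λ}) : ℝ :=
  (1 - t) * (if LatAdj d x.1 y.1 then 1 else 0) + t * (if 𝔈 x.1 y.1 then 1 else 0)

def diagC (x : {x // x ∈ Λ}) : ℝ := 2 * d - boundaryDeg d Λ x.1

def Topt (t : ℝ) :
    EuclideanSpace ℝ {x // x ∈ Λ} →ₗ[ℝ] EuclideanSpace ℝ {x // x ∈ Λ} where
  toFun φ := WithLp.toLp 2 (fun x => -(∑ y, coefA d Λ 𝔈 t x y * φ y) + diagC d Λ x * φ x)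
  map_add' φ ψ := by
    ext x
    simp only [PiLp.toLp_apply, PiLp.add_apply, mul_add, Finset.sum_add_distrib]
    ring
  map_smul' r φ := by
    ext x
    simp only [PiLp.toLp_apply, PiLp.smul_apply, smul_eq_mul, RingHom.id_apply, mul_add, mul_neg,
      Finset.mul_sum]
    congr 1
    · congr 1
      exact Finset.sum_congr rfl fun y _ => by ring
    · ring

lemma latAdj_comm (x y : Fin d → ℤ) : LatAdj d x y ↔ LatAdj d y x := by
  unfold LatAdj
  rw [show ∑ ν, (x ν - y ν) ^ 2 = ∑ ν, (y ν - x ν) ^ 2 from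
    Finset.sum_congr rfl fun ν _ => by ring]

lemma coefA_comm (hsym : ∀ x y, 𝔈 x y → 𝔈 y x) (t : ℝ) (x y : {x // x ∈ Λ}) :
    coefA d Λ 𝔈 t x y = coefA d Λ 𝔈 t y x := by
  unfold coefA
  rw [if_congr (latAdj_comm d x.1 y.1) rfl rfl,
    if_congr (Iff.intro (hsym x.1 y.1) (hsym y.1 x.1)) rfl rfl]

lemma coefA_nonneg {t : ℝ} (ht0 : 0 ≤ t) (ht1 : t ≤ 1) (x y : {x // x ∈ Λ}) :
    0 ≤ coefA d Λ 𝔈 t x y := by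
  unfold coefA
  split_ifs <;> nlinarith

lemma coefA_anti (hsub : ∀ x y, 𝔈 x y → LatAdj d x y) {s t : ℝ} (hst : s ≤ t)
    (ht1 : t ≤ 1) (x y : {x // x ∈ Λ}) :
    coefA d Λ 𝔈 t x y ≤ coefA d Λ 𝔈 s x y := by
  unfold coefA
  by_cases hE : 𝔈 x.1 y.1
  · rw [if_pos hE, if_pos (hsub _ _ hE)]
    norm_num
  · rw [if_neg hE]
    split_ifs <;> nlinarith

lemma hOp_comb (t : ℝ) (φ : {x // x ∈ Λ} → ℝ) (x : {x // x ∈ Λ}) :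
    hOp d Λ (LatAdj d) φ x + t * (hOp d Λ 𝔈 φ x - hOp d Λ (LatAdj d) φ x)
      = Topt d Λ 𝔈 t (WithLp.toLp 2 φ) x := by
  have h : ∀ y : {x // x ∈ Λ}, coefA d Λ 𝔈 t x y * φ y
      = (1 - t) * (if LatAdj d x.1 y.1 then φ y else 0)
        + t * (if 𝔈 x.1 y.1 then φ y else 0) := by
    intro y; unfold coefA; split_ifs <;> ring
  simp only [hOp, Topt, LinearMap.coe_mk, AddHom.coe_mk, diagC, PiLp.toLp_apply]
  rw [Finset.sum_congr rfl fun y _ => h y, Finset.sum_add_distrib,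
    ← Finset.mul_sum, ← Finset.mul_sum]
  ring

lemma sum_expand_l (a : {x // x ∈ Λ} → {x // x ∈ Λ} → ℝ) (c f g : {x // x ∈ Λ} → ℝ) :
    ∑ x, (-∑ y, a x y * f y + c x * f x) * g x
      = (∑ x, c x * (f x * g x)) - ∑ x, ∑ y, a x y * f y * g x := by
  rw [← Finset.sum_sub_distrib]
  refine Finset.sum_congr rfl fun x _ => ?_
  rw [add_mul, neg_mul, Finset.sum_mul]
  ring

lemma sum_expand_r (a : {x // x ∈ Λ} → {x // x ∈ Λ} → ℝ) (c f g : {x // x ∈ Λ} → ℝ) :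
    ∑ x, f x * (-∑ y, a x y * g y + c x * g x)
      = (∑ x, c x * (f x * g x)) - ∑ x, ∑ y, a x y * g y * f x := by
  rw [← Finset.sum_sub_distrib]
  refine Finset.sum_congr rfl fun x _ => ?_
  rw [mul_add, mul_neg, Finset.mul_sum,
    Finset.sum_congr rfl fun y _ => show f x * (a x y * g y) = a x y * g y * f x by ring]
  ring

lemma Topt_isSymm (hsym : ∀ x y, 𝔈 x y → 𝔈 y x) (t : ℝ) :
    (Topt d Λ 𝔈 t).IsSymmetric := by
  intro φ ψ
  simp only [Topt, LinearMap.coe_mk, AddHom.coe_mk, PiLp.toLp_apply, PiLp.inner_apply, RCLike.inner_apply,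
    conj_trivial]
  rw [sum_expand_l, sum_expand_r]
  have hD : ∑ x, ∑ y, coefA d Λ 𝔈 t x y * φ y * ψ x
      = ∑ x, ∑ y, coefA d Λ 𝔈 t x y * ψ y * φ x := by
    rw [Finset.sum_comm]
    exact Finset.sum_congr rfl fun x _ => Finset.sum_congr rfl fun y _ => by
      rw [coefA_comm d Λ 𝔈 hsym t y x]; ring
  rw [hD]

lemma inner_Topt (t : ℝ) (f g : EuclideanSpace ℝ {x // x ∈ Λ}) :
    @inner ℝ _ _ (Topt d Λ 𝔈 t f) g
      = (∑ x, diagC d Λ x * (f x * g x)) - ∑ x, ∑ y, coefA d Λ 𝔈 t x y * f y * g x := by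
  simp only [Topt, LinearMap.coe_mk, AddHom.coe_mk, PiLp.toLp_apply, PiLp.inner_apply, RCLike.inner_apply,
    conj_trivial]
  rw [← sum_expand_l d Λ _ _ f g]
  exact Finset.sum_congr rfl fun x _ => mul_comm _ _

end AuxEV

/-- The smallest eigenvalue `𝔢(t)` of `𝔥(t) = 𝔥_𝕃 + t (𝔥_𝔊 - 𝔥_𝕃)` is a
non-decreasing function of `t ∈ [0,1]`. -/

theorem smallest_eigenvalue_interpolation_monotone
    (d : ℕ) (Λ : Finset (Fin d → ℤ)) (hΛ : Λ.Nonempty)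
    (𝔈 : (Fin d → ℤ) → (Fin d → ℤ) → Prop)
    (hsym : ∀ x y, 𝔈 x y → 𝔈 y x)
    (hsub : ∀ x y, 𝔈 x y → LatAdj d x y) :
    MonotoneOn
      (fun t : ℝ => sInf {E : ℝ | ∃ φ : {x // x ∈ Λ} → ℝ, φ ≠ 0 ∧
        ∀ x, hOp d Λ (LatAdj d) φ x +
          t * (hOp d Λ 𝔈 φ x - hOp d Λ (LatAdj d) φ x) = E * φ x})
      (Set.Icc 0 1) := by
  classical
  haveI : Nonempty {x // x ∈ Λ} := hΛ.to_subtype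
  haveI : Nontrivial (EuclideanSpace ℝ {x // x ∈ Λ}) := by
    refine ⟨WithLp.toLp 2 (fun _ => 1 : {x // x ∈ Λ} → ℝ), 0, fun h => ?_⟩
    have := congrArg (fun v : EuclideanSpace ℝ {x // x ∈ Λ} => v (Classical.arbitrary _)) h
    simp only [Pi.zero_apply, PiLp.zero_apply] at this
    exact one_ne_zero this
  set S : ℝ → Set ℝ := fun t => {E : ℝ | ∃ φ : {x // x ∈ Λ} → ℝ, φ ≠ 0 ∧
      ∀ x, hOp d Λ (LatAdj d) φ x +
        t * (hOp d Λ 𝔈 φ x - hOp d Λ (LatAdj d) φ x) = E * φ x} with hS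
  have hmem : ∀ t E, E ∈ S t ↔ Module.End.HasEigenvalue (Topt d Λ 𝔈 t) E := by
    intro t E
    constructor
    · rintro ⟨φ, hφ0, hφ⟩
      refine Module.End.hasEigenvalue_of_hasEigenvector
        (x := WithLp.toLp 2 φ) ⟨Module.End.mem_eigenspace_iff.2 ?_,
            fun h => hφ0 (by simpa using congrArg WithLp.ofLp h)⟩
      ext x
      have := (hOp_comb d Λ 𝔈 t φ x).symm.trans (hφ x)
      simpa [PiLp.smul_apply, smul_eq_mul] using this
    · intro h
      obtain ⟨φ, hφmem, hφ0⟩ := h.exists_hasEigenvector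
      refine ⟨φ.ofLp, fun h => hφ0 (by simpa using congrArg (WithLp.toLp 2) h), fun x => ?_⟩
      have hTφ : Topt d Λ 𝔈 t φ = E • φ := Module.End.mem_eigenspace_iff.1 hφmem
      have := congrArg (fun v : EuclideanSpace ℝ {x // x ∈ Λ} => v x) hTφ
      rw [hOp_comb d Λ 𝔈 t φ x]
      simpa [PiLp.smul_apply, smul_eq_mul] using this
  set m : ℝ → ℝ := fun t =>
    ⨅ x : { x : EuclideanSpace ℝ {x // x ∈ Λ} // x ≠ 0 },
      RCLike.re (@inner ℝ _ _ (Topt d Λ 𝔈 t x) (x : EuclideanSpace ℝ {x // x ∈ Λ})) / ‖(x : EuclideanSpace ℝ {x // x ∈ Λ})‖ ^ 2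
    with hm
  have hbdd : ∀ t, BddBelow (Set.range fun x : { x : EuclideanSpace ℝ {x // x ∈ Λ} // x ≠ 0 } =>
      RCLike.re (@inner ℝ _ _ (Topt d Λ 𝔈 t x) (x : EuclideanSpace ℝ {x // x ∈ Λ})) / ‖(x : EuclideanSpace ℝ {x // x ∈ Λ})‖ ^ 2) := by
    intro t
    set T' : EuclideanSpace ℝ {x // x ∈ Λ} →L[ℝ] EuclideanSpace ℝ {x // x ∈ Λ} :=
      LinearMap.toContinuousLinearMap (Topt d Λ 𝔈 t) with hT'
    refine ⟨-‖T'‖, ?_⟩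
    rintro r ⟨⟨x, hx0⟩, rfl⟩
    have hx : (0 : ℝ) < ‖x‖ ^ 2 := pow_pos (norm_pos_iff.2 hx0) 2
    dsimp only
    rw [RCLike.re_to_real, le_div_iff₀ hx]
    have h1 : |@inner ℝ _ _ (Topt d Λ 𝔈 t x) x| ≤ ‖Topt d Λ 𝔈 t x‖ * ‖x‖ :=
      abs_real_inner_le_norm _ _
    have h2 : ‖Topt d Λ 𝔈 t x‖ ≤ ‖T'‖ * ‖x‖ := T'.le_opNorm x
    nlinarith [abs_nonneg (@inner ℝ _ _ (Topt d Λ 𝔈 t x) x),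
      neg_abs_le (@inner ℝ _ _ (Topt d Λ 𝔈 t x) x),
      norm_nonneg x, norm_nonneg T', norm_nonneg (Topt d Λ 𝔈 t x)]
  have hEV : ∀ t, Module.End.HasEigenvalue (Topt d Λ 𝔈 t) (m t) := by
    intro t
    have := (Topt_isSymm d Λ 𝔈 hsym t).hasEigenvalue_iInf_of_finiteDimensional
    simpa [hm, RCLike.ofReal_real_eq_id] using this
  have hLB : ∀ t E, E ∈ S t → m t ≤ E := by
    intro t E hE
    obtain ⟨φ, hφmem, hφ0⟩ := ((hmem t E).1 hE).exists_hasEigenvector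
    have hTφ : Topt d Λ 𝔈 t φ = E • φ := Module.End.mem_eigenspace_iff.1 hφmem
    have hφn : (0 : ℝ) < ‖φ‖ ^ 2 := pow_pos (norm_pos_iff.2 hφ0) 2
    have hray : RCLike.re (@inner ℝ _ _ (Topt d Λ 𝔈 t φ) φ) / ‖φ‖ ^ 2 = E := by
      rw [RCLike.re_to_real, hTφ, real_inner_smul_left, real_inner_self_eq_norm_sq]
      field_simp
    calc m t ≤ RCLike.re (@inner ℝ _ _ (Topt d Λ 𝔈 t φ) φ) / ‖φ‖ ^ 2 :=
          ciInf_le (hbdd t) ⟨φ, hφ0⟩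
      _ = E := hray
  have hsInf : ∀ t, sInf (S t) = m t := fun t =>
    le_antisymm (csInf_le ⟨m t, fun E hE => hLB t E hE⟩ ((hmem t (m t)).2 (hEV t)))
      (le_csInf ⟨m t, (hmem t (m t)).2 (hEV t)⟩ (hLB t))
  intro s hs t ht hst
  show sInf (S s) ≤ sInf (S t)
  rw [hsInf s, hsInf t]
  obtain ⟨φ, hφmem, hφ0⟩ := (hEV t).exists_hasEigenvector
  have hTφ : Topt d Λ 𝔈 t φ = m t • φ := Module.End.mem_eigenspace_iff.1 hφmem
  set ψ : EuclideanSpace ℝ {x // x ∈ Λ} := WithLp.toLp 2 (fun x => |φ x| : {x // x ∈ Λ} → ℝ) with hψ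
  have hψap : ∀ x, ψ x = |φ x| := fun x => rfl
  have hψ0 : ψ ≠ 0 := by
    intro h
    apply hφ0
    ext x
    have h1 : |φ x| = 0 := by
      have := congrArg (fun v : EuclideanSpace ℝ {x // x ∈ Λ} => v x) h
      simpa [hψap, Pi.zero_apply, PiLp.zero_apply] using this
    simpa [Pi.zero_apply, PiLp.zero_apply] using abs_eq_zero.1 h1
  have hφn : (0 : ℝ) < ‖φ‖ ^ 2 := pow_pos (norm_pos_iff.2 hφ0) 2
  have hnorm : ‖ψ‖ ^ 2 = ‖φ‖ ^ 2 := by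
    rw [← real_inner_self_eq_norm_sq, ← real_inner_self_eq_norm_sq]
    simp only [PiLp.inner_apply, RCLike.inner_apply, conj_trivial]
    exact Finset.sum_congr rfl fun x _ => by
      rw [hψap x, abs_mul_abs_self]
  have hnum : @inner ℝ _ _ (Topt d Λ 𝔈 s ψ) ψ ≤ @inner ℝ _ _ (Topt d Λ 𝔈 t φ) φ := by
    rw [inner_Topt, inner_Topt]
    have hdiag : ∑ x, diagC d Λ x * (ψ x * ψ x) = ∑ x, diagC d Λ x * (φ x * φ x) :=
      Finset.sum_congr rfl fun x _ => by rw [hψap x, abs_mul_abs_self]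
    rw [hdiag]
    have hcross : ∑ x, ∑ y, coefA d Λ 𝔈 t x y * φ y * φ x
        ≤ ∑ x, ∑ y, coefA d Λ 𝔈 s x y * ψ y * ψ x := by
      refine Finset.sum_le_sum fun x _ => Finset.sum_le_sum fun y _ => ?_
      have h0 : 0 ≤ coefA d Λ 𝔈 t x y := coefA_nonneg d Λ 𝔈 (hs.1.trans hst) ht.2 x y
      have h1 : coefA d Λ 𝔈 t x y ≤ coefA d Λ 𝔈 s x y := coefA_anti d Λ 𝔈 hsub hst ht.2 x y
      rw [hψap x, hψap y]
      calc coefA d Λ 𝔈 t x y * φ y * φ x ≤ coefA d Λ 𝔈 t x y * (|φ y| * |φ x|) := by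
            rw [mul_assoc]
            exact mul_le_mul_of_nonneg_left (by rw [← abs_mul]; exact le_abs_self _) h0
        _ ≤ coefA d Λ 𝔈 s x y * (|φ y| * |φ x|) :=
            mul_le_mul_of_nonneg_right h1 (by positivity)
        _ = coefA d Λ 𝔈 s x y * |φ y| * |φ x| := by ring
    linarith
  have hTtφ : @inner ℝ _ _ (Topt d Λ 𝔈 t φ) φ = m t * ‖φ‖ ^ 2 := by
    rw [hTφ, real_inner_smul_left, real_inner_self_eq_norm_sq]
  have hray : RCLike.re (@inner ℝ _ _ (Topt d Λ 𝔈 s ψ) ψ) / ‖ψ‖ ^ 2 ≤ m t := by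
    rw [RCLike.re_to_real, hnorm, div_le_iff₀ hφn]
    calc @inner ℝ _ _ (Topt d Λ 𝔈 s ψ) ψ ≤ @inner ℝ _ _ (Topt d Λ 𝔈 t φ) φ := hnum
      _ = m t * ‖φ‖ ^ 2 := hTtφ
  exact le_trans (ciInf_le (hbdd s) ⟨ψ, hψ0⟩) hray
end

section
/- Let 𝔥 be a Hermitian matrix on ℓ²(Λ), Λ finite, such that 2d·I - 𝔥 has only nonnegative matrix entries. Then the smallest eigenvalue of 𝔥 equals the infimum of ⟨φ, 𝔥φ⟩/⟨φ, φ⟩ over nonzero vectors φ with all components nonnegative. -/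
open scoped Matrix

section helpers
variable {Λ : Type*} [Fintype Λ] [DecidableEq Λ] [Nonempty Λ]

omit [DecidableEq Λ] [Nonempty Λ] in
lemma dot_self_re (v : Λ → ℂ) : (star v ⬝ᵥ v).re = ∑ x, Complex.normSq (v x) := by
  simp [dotProduct, Complex.re_sum, ← Complex.normSq_eq_conj_mul_self]

omit [DecidableEq Λ] [Nonempty Λ] in
lemma dot_self_re_pos {v : Λ → ℂ} (hv : v ≠ 0) : 0 < (star v ⬝ᵥ v).re := by
  rw [dot_self_re]
  obtain ⟨x, hx⟩ : ∃ x, v x ≠ 0 := by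
    by_contra h; push_neg at h; exact hv (funext h)
  exact Finset.sum_pos' (fun i _ => Complex.normSq_nonneg _)
    ⟨x, Finset.mem_univ x, Complex.normSq_pos.mpr hx⟩

lemma quad_lb (𝔥 : Matrix Λ Λ ℂ) (h𝔥 : 𝔥.IsHermitian) (x : Λ → ℂ) :
    (⨅ i, h𝔥.eigenvalues i) * (star x ⬝ᵥ x).re ≤ (star x ⬝ᵥ 𝔥.mulVec x).re := by
  set U := (h𝔥.eigenvectorUnitary : Matrix Λ Λ ℂ) with hU
  set y := star U *ᵥ x with hy
  have h1 : star x ⬝ᵥ 𝔥.mulVec x =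
      star y ⬝ᵥ (Matrix.diagonal (Complex.ofReal ∘ h𝔥.eigenvalues)) *ᵥ y := by
    conv_lhs => rw [h𝔥.spectral_theorem, Unitary.conjStarAlgAut_apply]
    rw [← Matrix.mulVec_mulVec, ← Matrix.mulVec_mulVec, Matrix.dotProduct_mulVec,
      hy, Matrix.star_mulVec, Matrix.star_eq_conjTranspose, Matrix.conjTranspose_conjTranspose,
      ← Matrix.dotProduct_mulVec]
    exact Matrix.dotProduct_mulVec _ _ _
  have h2 : star y ⬝ᵥ y = star x ⬝ᵥ x := by
    rw [hy, Matrix.star_mulVec, Matrix.star_eq_conjTranspose, Matrix.conjTranspose_conjTranspose,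
      ← Matrix.dotProduct_mulVec, Matrix.mulVec_mulVec,
      show U * Uᴴ = 1 from Matrix.mem_unitaryGroup_iff.mp (h𝔥.eigenvectorUnitary).2,
      Matrix.one_mulVec]
  rw [h1, ← h2, dot_self_re]
  have h3 : (star y ⬝ᵥ (Matrix.diagonal (Complex.ofReal ∘ h𝔥.eigenvalues)) *ᵥ y).re
      = ∑ i, h𝔥.eigenvalues i * Complex.normSq (y i) := by
    simp only [dotProduct, Matrix.mulVec_diagonal, Complex.re_sum, Function.comp,
      Pi.star_apply]
    congr 1; ext i
    rw [show star (y i) * ((h𝔥.eigenvalues i : ℂ) * y i)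
        = (h𝔥.eigenvalues i : ℂ) * (star (y i) * y i) by ring]
    simp [RCLike.star_def, ← Complex.normSq_eq_conj_mul_self]
  rw [h3, Finset.mul_sum]
  refine Finset.sum_le_sum fun i _ => ?_
  exact mul_le_mul_of_nonneg_right (ciInf_le (Finite.bddBelow_range _) i) (Complex.normSq_nonneg _)

end helpers

/-- If `2d·I - 𝔥` has only nonnegative matrix entries, then the smallest
eigenvalue of the Hermitian matrix `𝔥` equals the infimum of the Rayleigh
quotient over nonzero vectors with nonnegative components. -/
theorem smallest_eigenvalue_nonneg_rayleigh
    {Λ : Type*} [Fintype Λ] [DecidableEq Λ] [Nonempty Λ] (d : ℕ)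
    (𝔥 : Matrix Λ Λ ℂ) (h𝔥 : 𝔥.IsHermitian)
    (hentries : ∀ x y : Λ, ∃ r : ℝ, 0 ≤ r ∧
      ((2 * (d:ℂ)) • (1 : Matrix Λ Λ ℂ) - 𝔥) x y = (r : ℂ)) :
    (⨅ i, h𝔥.eigenvalues i) =
      sInf {r : ℝ | ∃ φ : Λ → ℂ, φ ≠ 0 ∧
        (∀ x : Λ, ∃ s : ℝ, 0 ≤ s ∧ φ x = (s : ℂ)) ∧
        r = (star φ ⬝ᵥ 𝔥.mulVec φ).re / (star φ ⬝ᵥ φ).re} := by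
  classical
  choose r hr0 hrA using hentries
  set lam := ⨅ i, h𝔥.eigenvalues i with hlam
  -- lower bound for all Rayleigh quotients
  have hlb : ∀ s ∈ {r : ℝ | ∃ φ : Λ → ℂ, φ ≠ 0 ∧
      (∀ x : Λ, ∃ s : ℝ, 0 ≤ s ∧ φ x = (s : ℂ)) ∧
      r = (star φ ⬝ᵥ 𝔥.mulVec φ).re / (star φ ⬝ᵥ φ).re}, lam ≤ s := by
    rintro s ⟨φ, hφ0, -, rfl⟩
    rw [le_div_iff₀ (dot_self_re_pos hφ0)]
    exact quad_lb 𝔥 h𝔥 φ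
  -- the minimizing eigenvector and its componentwise absolute value
  obtain ⟨i0, hi0⟩ := exists_eq_ciInf_of_finite (f := h𝔥.eigenvalues)
  set ψ : Λ → ℂ := ⇑(h𝔥.eigenvectorBasis i0) with hψdef
  have hψ0 : ψ ≠ 0 := by
    intro h
    have hz : h𝔥.eigenvectorBasis i0 = 0 := by
      ext x; exact congrFun h x
    have hn := (h𝔥.eigenvectorBasis).orthonormal.1 i0
    rw [hz] at hn; simp at hn
  set φ : Λ → ℂ := fun x => ((‖ψ x‖ : ℝ) : ℂ) with hφdef
  have hφnn : ∀ x : Λ, ∃ s : ℝ, 0 ≤ s ∧ φ x = (s : ℂ) :=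
    fun x => ⟨‖ψ x‖, norm_nonneg _, rfl⟩
  have hφ0 : φ ≠ 0 := by
    intro h
    apply hψ0
    funext x
    have := congrFun h x
    simp only [hφdef, Pi.zero_apply, Complex.ofReal_eq_zero] at this
    simpa using this
  -- norms agree
  have hNeq : (star φ ⬝ᵥ φ).re = (star ψ ⬝ᵥ ψ).re := by
    rw [dot_self_re, dot_self_re]
    refine Finset.sum_congr rfl fun x _ => ?_
    simp [hφdef, Complex.normSq_ofReal, ← Complex.sq_norm, sq]
  have hN : 0 < (star ψ ⬝ᵥ ψ).re := dot_self_re_pos hψ0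
  set A : Matrix Λ Λ ℂ := (2 * (d:ℂ)) • (1 : Matrix Λ Λ ℂ) - 𝔥 with hAdef
  -- decomposition of the quadratic form
  have hHrep : ∀ v : Λ → ℂ, (star v ⬝ᵥ 𝔥.mulVec v).re
      = 2 * d * (star v ⬝ᵥ v).re - (star v ⬝ᵥ A.mulVec v).re := by
    intro v
    have hm : 𝔥.mulVec v = (2 * (d:ℂ)) • v - A.mulVec v := by
      rw [hAdef, Matrix.sub_mulVec, Matrix.smul_mulVec, Matrix.one_mulVec]
      abel
    rw [hm, dotProduct_sub, dotProduct_smul, Complex.sub_re, smul_eq_mul,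
      show (2 * (d:ℂ)) = ((2 * (d:ℝ) : ℝ) : ℂ) by push_cast; ring,
      Complex.re_ofReal_mul]
  -- comparison of the quadratic forms for A
  have hQA : (star ψ ⬝ᵥ A.mulVec ψ).re ≤ (star φ ⬝ᵥ A.mulVec φ).re := by
    simp only [dotProduct, Matrix.mulVec, Finset.mul_sum, Complex.re_sum, Pi.star_apply]
    refine Finset.sum_le_sum fun x _ => Finset.sum_le_sum fun y _ => ?_
    have hAxy : A x y = (r x y : ℂ) := hrA x y
    rw [hAxy]
    have hL : (star (ψ x) * ((r x y : ℂ) * ψ y)).re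
        = r x y * ((starRingEnd ℂ) (ψ x) * ψ y).re := by
      rw [show star (ψ x) * ((r x y : ℂ) * ψ y)
          = (r x y : ℂ) * (star (ψ x) * ψ y) by ring]
      simp [RCLike.star_def, Complex.re_ofReal_mul]
    have hR : (star (φ x) * ((r x y : ℂ) * φ y)).re
        = r x y * (‖ψ x‖ * ‖ψ y‖) := by
      simp only [hφdef]
      rw [show star (((‖ψ x‖ : ℝ) : ℂ)) * ((r x y : ℂ) * ((‖ψ y‖ : ℝ) : ℂ))
          = ((r x y * (‖ψ x‖ * ‖ψ y‖) : ℝ) : ℂ) by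
        push_cast; rw [RCLike.star_def, Complex.conj_ofReal]; ring]
      exact Complex.ofReal_re _
    rw [hL, hR]
    refine mul_le_mul_of_nonneg_left ?_ (hr0 x y)
    calc ((starRingEnd ℂ) (ψ x) * ψ y).re ≤ ‖(starRingEnd ℂ) (ψ x) * ψ y‖ :=
          Complex.re_le_norm _
      _ = ‖ψ x‖ * ‖ψ y‖ := by rw [norm_mul, Complex.norm_conj]
  -- the eigenvector quadratic form
  have hQψ : (star ψ ⬝ᵥ 𝔥.mulVec ψ).re = lam * (star ψ ⬝ᵥ ψ).re := by
    have hm : 𝔥.mulVec ψ = h𝔥.eigenvalues i0 • ψ := h𝔥.mulVec_eigenvectorBasis i0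
    rw [hm, dotProduct_smul, hlam, ← hi0]
    rw [Complex.real_smul, Complex.re_ofReal_mul]
  have hkey : (star φ ⬝ᵥ 𝔥.mulVec φ).re ≤ lam * (star ψ ⬝ᵥ ψ).re := by
    rw [hHrep φ, ← hQψ, hHrep ψ, hNeq]
    linarith [hQA]
  refine le_antisymm (le_csInf ⟨_, ⟨φ, hφ0, hφnn, rfl⟩⟩ hlb)
    (csInf_le_of_le ⟨lam, hlb⟩ ⟨φ, hφ0, hφnn, rfl⟩ ?_)
  rw [div_le_iff₀ (dot_self_re_pos hφ0), hNeq]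
  exact hkey.trans (by rw [mul_comm])
end

section
/- Let A be a self-adjoint contraction on a Hilbert space (‖A‖ ≤ 1), φ a unit vector, and suppose ⟨φ, Aⁿφ⟩ ≥ c n^{-d/2} for all integers n ≥ n₀, with c > 0. Then there exist c' > 0 and t₀ ≥ 0 such that e^{-t} Σ_{n≥0} (tⁿ/n!) ⟨φ, Aⁿφ⟩ ≥ c' t^{-d/2} for all t ≥ t₀, provided additionally ⟨φ, Aⁿφ⟩ ≥ 0 for all n. -/
open scoped InnerProductSpace

private lemma pois_summable (t : ℝ) :
    Summable (fun n : ℕ => t ^ n / n.factorial) :=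
  Real.summable_pow_div_factorial t

private lemma pois_tsum (t : ℝ) : ∑' n : ℕ, t ^ n / (n.factorial : ℝ) = Real.exp t := by
  rw [Real.exp_eq_exp_ℝ, NormedSpace.exp_eq_tsum_div]

private lemma shift_eq (t : ℝ) (n : ℕ) :
    ((n : ℝ) + 1) * (t ^ (n + 1) / (n + 1).factorial) = t * (t ^ n / n.factorial) := by
  have h1 : ((n : ℝ) + 1) ≠ 0 := by positivity
  have h2 : (n.factorial : ℝ) ≠ 0 := by positivity
  rw [Nat.factorial_succ]
  push_cast
  field_simp
  ring

private lemma pois_summable_lin (t : ℝ) :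
    Summable (fun n : ℕ => (n : ℝ) * (t ^ n / n.factorial)) := by
  rw [← summable_nat_add_iff 1]
  have h : (fun n : ℕ => ((n + 1 : ℕ) : ℝ) * (t ^ (n + 1) / (n + 1).factorial))
      = fun n : ℕ => t * (t ^ n / n.factorial) := by
    funext n; push_cast; exact shift_eq t n
  exact h ▸ (pois_summable t).mul_left t

private lemma pois_tsum_lin (t : ℝ) :
    ∑' n : ℕ, (n : ℝ) * (t ^ n / n.factorial) = t * Real.exp t := by
  rw [Summable.tsum_eq_zero_add (pois_summable_lin t)]
  have h : (fun n : ℕ => ((n + 1 : ℕ) : ℝ) * (t ^ (n + 1) / (n + 1).factorial))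
      = fun n : ℕ => t * (t ^ n / n.factorial) := by
    funext n; push_cast; exact shift_eq t n
  simp only [Nat.cast_zero, zero_mul, zero_add, h]
  rw [tsum_mul_left, pois_tsum]

private lemma shift_eq2 (t : ℝ) (n : ℕ) :
    (((n : ℝ) + 1) * (((n : ℝ) + 1) - 1)) * (t ^ (n + 1) / (n + 1).factorial)
      = t * ((n : ℝ) * (t ^ n / n.factorial)) := by
  have h := shift_eq t n
  calc (((n : ℝ) + 1) * (((n : ℝ) + 1) - 1)) * (t ^ (n + 1) / (n + 1).factorial)
      = (n : ℝ) * (((n : ℝ) + 1) * (t ^ (n + 1) / (n + 1).factorial)) := by ring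
    _ = (n : ℝ) * (t * (t ^ n / n.factorial)) := by rw [h]
    _ = t * ((n : ℝ) * (t ^ n / n.factorial)) := by ring

private lemma pois_summable_quad (t : ℝ) :
    Summable (fun n : ℕ => ((n : ℝ) * ((n : ℝ) - 1)) * (t ^ n / n.factorial)) := by
  rw [← summable_nat_add_iff 1]
  have h : (fun n : ℕ => (((n + 1 : ℕ) : ℝ) * (((n + 1 : ℕ) : ℝ) - 1)) *
        (t ^ (n + 1) / (n + 1).factorial))
      = fun n : ℕ => t * ((n : ℝ) * (t ^ n / n.factorial)) := by
    funext n; push_cast; exact shift_eq2 t n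
  exact h ▸ (pois_summable_lin t).mul_left t

private lemma pois_tsum_quad (t : ℝ) :
    ∑' n : ℕ, ((n : ℝ) * ((n : ℝ) - 1)) * (t ^ n / n.factorial) = t ^ 2 * Real.exp t := by
  rw [Summable.tsum_eq_zero_add (pois_summable_quad t)]
  have h : (fun n : ℕ => (((n + 1 : ℕ) : ℝ) * (((n + 1 : ℕ) : ℝ) - 1)) *
        (t ^ (n + 1) / (n + 1).factorial))
      = fun n : ℕ => t * ((n : ℝ) * (t ^ n / n.factorial)) := by
    funext n; push_cast; exact shift_eq2 t n
  simp only [Nat.cast_zero, zero_mul, zero_add, h]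
  rw [tsum_mul_left, pois_tsum_lin]
  ring

private lemma pois_var_summable (t : ℝ) :
    Summable (fun n : ℕ => ((n : ℝ) - t) ^ 2 * (t ^ n / n.factorial)) := by
  have h : (fun n : ℕ => ((n : ℝ) - t) ^ 2 * (t ^ n / n.factorial))
      = fun n : ℕ => ((n : ℝ) * ((n : ℝ) - 1)) * (t ^ n / n.factorial)
        + ((1 - 2 * t) * ((n : ℝ) * (t ^ n / n.factorial))
          + t ^ 2 * (t ^ n / n.factorial)) := by
    funext n; ring
  rw [h]
  exact (pois_summable_quad t).add (((pois_summable_lin t).mul_left _).add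
    ((pois_summable t).mul_left _))

private lemma pois_var (t : ℝ) :
    ∑' n : ℕ, ((n : ℝ) - t) ^ 2 * (t ^ n / n.factorial) = t * Real.exp t := by
  have h : (fun n : ℕ => ((n : ℝ) - t) ^ 2 * (t ^ n / n.factorial))
      = fun n : ℕ => ((n : ℝ) * ((n : ℝ) - 1)) * (t ^ n / n.factorial)
        + ((1 - 2 * t) * ((n : ℝ) * (t ^ n / n.factorial))
          + t ^ 2 * (t ^ n / n.factorial)) := by
    funext n; ring
  rw [h, Summable.tsum_add (pois_summable_quad t) (((pois_summable_lin t).mul_left _).add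
        ((pois_summable t).mul_left _)),
    Summable.tsum_add ((pois_summable_lin t).mul_left _) ((pois_summable t).mul_left _),
    tsum_mul_left, tsum_mul_left, pois_tsum_quad, pois_tsum_lin, pois_tsum]
  ring

/-- Key quantitative lemma, for an abstract nonnegative bounded sequence. -/
private lemma pois_key (t : ℝ) (ht8 : 8 ≤ t) (m₀ : ℕ) (hm1 : 1 ≤ m₀)
    (hm : 2 * (m₀ : ℝ) ≤ t) (e : ℝ) (he : e ≤ 0) (c : ℝ) (hc : 0 < c)
    (a : ℕ → ℝ) (ha0 : ∀ n, 0 ≤ a n) (ha1 : ∀ n, a n ≤ 1)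
    (hlow : ∀ n : ℕ, m₀ ≤ n → c * (n : ℝ) ^ e ≤ a n) :
    c * (2 : ℝ) ^ e * t ^ e / 2 ≤
      Real.exp (-t) * ∑' n : ℕ, (t ^ n / n.factorial) * a n := by
  have ht0 : (0 : ℝ) < t := by linarith
  set p : ℕ → ℝ := fun n => t ^ n / n.factorial with hp
  have hp0 : ∀ n, 0 ≤ p n := fun n => by
    have : (0:ℝ) ≤ t ^ n := pow_nonneg ht0.le n
    positivity
  set K : ℝ := c * (2 * t) ^ e with hKdef
  have hK0 : 0 < K := by
    have : (0:ℝ) < (2 * t) ^ e := Real.rpow_pos_of_pos (by linarith) e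
    positivity
  -- summability of the main series
  have hSa : Summable (fun n => p n * a n) := by
    refine Summable.of_norm_bounded (pois_summable t) ?_
    intro n
    rw [Real.norm_eq_abs, abs_mul, abs_of_nonneg (hp0 n), abs_of_nonneg (ha0 n)]
    calc p n * a n ≤ p n * 1 := mul_le_mul_of_nonneg_left (ha1 n) (hp0 n)
      _ = p n := mul_one _
  -- the "good" part
  set g : ℕ → ℝ := fun n => if m₀ ≤ n ∧ (n : ℝ) ≤ 2 * t then p n else 0 with hgdef
  have hg0 : ∀ n, 0 ≤ g n := fun n => by
    by_cases hn : m₀ ≤ n ∧ (n : ℝ) ≤ 2 * t <;> simp [hgdef, hn, hp0 n]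
  have hgp : ∀ n, g n ≤ p n := fun n => by
    by_cases hn : m₀ ≤ n ∧ (n : ℝ) ≤ 2 * t <;> simp [hgdef, hn, hp0 n]
  have hSg : Summable g := (pois_summable t).of_nonneg_of_le hg0 hgp
  -- the "bad" part
  set b : ℕ → ℝ := fun n => if m₀ ≤ n ∧ (n : ℝ) ≤ 2 * t then 0 else p n with hbdef
  have hb_le : ∀ n, b n ≤ 4 / t ^ 2 * (((n : ℝ) - t) ^ 2 * p n) := by
    intro n
    by_cases hn : m₀ ≤ n ∧ (n : ℝ) ≤ 2 * t
    · simp only [hbdef, if_pos hn]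
      have h1 : (0:ℝ) ≤ 4 / t ^ 2 := by positivity
      have h2 : (0:ℝ) ≤ ((n : ℝ) - t) ^ 2 * p n := mul_nonneg (sq_nonneg _) (hp0 n)
      exact mul_nonneg h1 h2
    · simp only [hbdef, if_neg hn]
      have hsq : (t / 2) ^ 2 ≤ ((n : ℝ) - t) ^ 2 := by
        rcases not_and_or.mp hn with h | h
        · push_neg at h
          have hn' : (n : ℝ) < (m₀ : ℝ) := by exact_mod_cast h
          have : (n : ℝ) ≤ t / 2 := by linarith
          nlinarith
        · push_neg at h
          nlinarith
      have h4 : 1 ≤ 4 / t ^ 2 * ((n : ℝ) - t) ^ 2 := by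
        have ht2 : (0:ℝ) < t ^ 2 := by positivity
        rw [div_mul_eq_mul_div, le_div_iff₀ ht2, one_mul]
        nlinarith
      calc p n = 1 * p n := (one_mul _).symm
        _ ≤ 4 / t ^ 2 * ((n : ℝ) - t) ^ 2 * p n :=
            mul_le_mul_of_nonneg_right h4 (hp0 n)
        _ = 4 / t ^ 2 * (((n : ℝ) - t) ^ 2 * p n) := by ring
  have hb0 : ∀ n, 0 ≤ b n := fun n => by
    by_cases hn : m₀ ≤ n ∧ (n : ℝ) ≤ 2 * t <;> simp [hbdef, hn, hp0 n]
  have hSb : Summable b := by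
    refine Summable.of_nonneg_of_le hb0 hb_le ?_
    exact (pois_var_summable t).mul_left _
  -- g + b = p
  have hsplit : ∀ n, g n + b n = p n := fun n => by
    by_cases hn : m₀ ≤ n ∧ (n : ℝ) ≤ 2 * t <;> simp [hgdef, hbdef, hn]
  have hgb : (∑' n, g n) + (∑' n, b n) = Real.exp t := by
    rw [← Summable.tsum_add hSg hSb]
    rw [show (fun n => g n + b n) = p from funext hsplit]
    exact pois_tsum t
  -- bound the bad mass
  have hbad : (∑' n, b n) ≤ 4 / t ^ 2 * (t * Real.exp t) := by
    calc (∑' n, b n) ≤ ∑' n : ℕ, 4 / t ^ 2 * (((n : ℝ) - t) ^ 2 * p n) :=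
          Summable.tsum_le_tsum hb_le hSb ((pois_var_summable t).mul_left _)
      _ = 4 / t ^ 2 * ∑' n : ℕ, ((n : ℝ) - t) ^ 2 * p n := tsum_mul_left
      _ = 4 / t ^ 2 * (t * Real.exp t) := by
          congr 1
          exact pois_var t
  have hbadhalf : 4 / t ^ 2 * (t * Real.exp t) ≤ Real.exp t / 2 := by
    have h1 : 4 / t ^ 2 * (t * Real.exp t) = 4 / t * Real.exp t := by
      field_simp
    rw [h1]
    have h2 : 4 / t ≤ 1 / 2 := by
      rw [div_le_div_iff₀ ht0 (by norm_num : (0:ℝ) < 2)]; linarith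
    have := Real.exp_pos t
    nlinarith
  have hge : Real.exp t / 2 ≤ ∑' n, g n := by linarith
  -- pointwise comparison on the good part
  have hg_le : ∀ n, g n * K ≤ p n * a n := by
    intro n
    by_cases hn : m₀ ≤ n ∧ (n : ℝ) ≤ 2 * t
    · simp only [hgdef, if_pos hn]
      have hn0 : (0 : ℝ) < (n : ℝ) := by
        have : (1 : ℕ) ≤ n := le_trans hm1 hn.1
        exact_mod_cast this
      have hmono : (2 * t) ^ e ≤ (n : ℝ) ^ e :=
        Real.rpow_le_rpow_of_nonpos hn0 hn.2 he
      have hKa : K ≤ a n := by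
        calc K = c * (2 * t) ^ e := hKdef
          _ ≤ c * (n : ℝ) ^ e := mul_le_mul_of_nonneg_left hmono hc.le
          _ ≤ a n := hlow n hn.1
      exact mul_le_mul_of_nonneg_left hKa (hp0 n)
    · simp only [hgdef, if_neg hn, zero_mul]
      exact mul_nonneg (hp0 n) (ha0 n)
  have hmain : (∑' n, g n) * K ≤ ∑' n, p n * a n := by
    rw [← tsum_mul_right]
    exact Summable.tsum_le_tsum hg_le (hSg.mul_right K) hSa
  -- put everything together
  have hKval : K = c * ((2 : ℝ) ^ e * t ^ e) := by
    rw [hKdef, Real.mul_rpow (by norm_num) ht0.le]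
  have hcalc : Real.exp (-t) * (Real.exp t / 2 * K) = c * (2 : ℝ) ^ e * t ^ e / 2 := by
    rw [hKval, Real.exp_neg]
    field_simp [Real.exp_ne_zero t]
  calc c * (2 : ℝ) ^ e * t ^ e / 2 = Real.exp (-t) * (Real.exp t / 2 * K) := hcalc.symm
    _ ≤ Real.exp (-t) * ((∑' n, g n) * K) :=
        mul_le_mul_of_nonneg_left (mul_le_mul_of_nonneg_right hge hK0.le)
          (Real.exp_pos (-t)).le
    _ ≤ Real.exp (-t) * ∑' n, p n * a n :=
        mul_le_mul_of_nonneg_left hmain (Real.exp_pos (-t)).le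

/-- Transfer of discrete-time heat-kernel lower bounds to continuous time: if
`A` is a self-adjoint contraction with `⟨φ, Aⁿφ⟩ ≥ 0` for all `n` and
`⟨φ, Aⁿφ⟩ ≥ c n^{-d/2}` for `n ≥ n₀`, then the Poissonized quantity
`e^{-t} ∑ₙ (tⁿ/n!) ⟨φ, Aⁿφ⟩` is bounded below by `c' t^{-d/2}` for large `t`. -/
theorem poissonization_lower_bound
    {H : Type*} [NormedAddCommGroup H] [InnerProductSpace ℂ H] [CompleteSpace H]
    (d : ℕ) (A : H →L[ℂ] H) (hA : IsSelfAdjoint A) (hnorm : ‖A‖ ≤ 1)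
    (φ : H) (hφ : ‖φ‖ = 1) (c : ℝ) (hc : 0 < c) (n₀ : ℕ)
    (hpos : ∀ n : ℕ, 0 ≤ (⟪φ, (A ^ n) φ⟫_ℂ).re)
    (hlow : ∀ n : ℕ, n₀ ≤ n → c * (n : ℝ) ^ (-(d : ℝ) / 2) ≤ (⟪φ, (A ^ n) φ⟫_ℂ).re) :
    ∃ c' > (0:ℝ), ∃ t₀ : ℝ, 0 ≤ t₀ ∧ ∀ t : ℝ, t₀ ≤ t →
      c' * t ^ (-(d : ℝ) / 2) ≤
        Real.exp (-t) * ∑' n : ℕ, (t ^ n / n.factorial) * (⟪φ, (A ^ n) φ⟫_ℂ).re := by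
  have hpow : ∀ (n : ℕ) (ψ : H), ‖(A ^ n) ψ‖ ≤ ‖ψ‖ := by
    intro n
    induction n with
    | zero => intro ψ; simp
    | succ n ih =>
      intro ψ
      have hrw : (A ^ (n + 1)) ψ = (A ^ n) (A ψ) := by
        rw [pow_succ]; rfl
      rw [hrw]
      calc ‖(A ^ n) (A ψ)‖ ≤ ‖A ψ‖ := ih _
        _ ≤ ‖A‖ * ‖ψ‖ := A.le_opNorm ψ
        _ ≤ 1 * ‖ψ‖ := mul_le_mul_of_nonneg_right hnorm (norm_nonneg ψ)
        _ = ‖ψ‖ := one_mul _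
  have ha1 : ∀ n : ℕ, (⟪φ, (A ^ n) φ⟫_ℂ).re ≤ 1 := by
    intro n
    calc (⟪φ, (A ^ n) φ⟫_ℂ).re ≤ |(⟪φ, (A ^ n) φ⟫_ℂ).re| := le_abs_self _
      _ ≤ ‖⟪φ, (A ^ n) φ⟫_ℂ‖ := Complex.abs_re_le_norm _
      _ ≤ ‖φ‖ * ‖(A ^ n) φ‖ := norm_inner_le_norm _ _
      _ ≤ ‖φ‖ * ‖φ‖ := mul_le_mul_of_nonneg_left (hpow n φ) (norm_nonneg φ)
      _ = 1 := by rw [hφ]; ring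
  set e : ℝ := -(d : ℝ) / 2 with hedef
  have he : e ≤ 0 := by
    rw [hedef]
    have : (0:ℝ) ≤ (d:ℝ) := Nat.cast_nonneg d
    linarith
  set m₀ : ℕ := max n₀ 1 with hm₀
  refine ⟨c * (2 : ℝ) ^ e / 2, by positivity, max (2 * (m₀ : ℝ)) 8, ?_, ?_⟩
  · exact le_trans (by norm_num) (le_max_right _ _)
  · intro t ht
    have ht8 : (8 : ℝ) ≤ t := le_trans (le_max_right _ _) ht
    have htm : 2 * (m₀ : ℝ) ≤ t := le_trans (le_max_left _ _) ht
    have hkey := pois_key t ht8 m₀ (le_max_right _ _) htm e he c hc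
      (fun n => (⟪φ, (A ^ n) φ⟫_ℂ).re) hpos ha1
      (fun n hn => hlow n (le_trans (le_max_left _ _) hn))
    calc c * (2 : ℝ) ^ e / 2 * t ^ e = c * (2 : ℝ) ^ e * t ^ e / 2 := by ring
      _ ≤ Real.exp (-t) * ∑' n : ℕ, (t ^ n / n.factorial) * (⟪φ, (A ^ n) φ⟫_ℂ).re := hkey
end
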